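/- Let d ≥ 3 be an integer, α = 4 − d, and define φ(r) = (ω_{d−1}/ω_d) ∫₀^π (r − cos θ)(sin θ)^{d−2} (1 + r² − 2r cos θ)^{(α−2)/2} dθ. Then φ(r)/r is constant on (0,1] and strictly decreasing on [1, ∞). -/

import Mathlib

open Real MeasureTheory

/-- Surface area of the unit sphere in ℝ^m: ω_m = 2 π^{m/2} / Γ(m/2). -/
noncomputable def sphereArea (m : ℕ) : ℝ :=
  2 * Real.pi ^ ((m : ℝ) / 2) / Real.Gamma ((m : ℝ) / 2)

/-!
Write `k = d - 2` and `Q = 1 + r² - 2 r cos θ`. The integral is `r J_k - K_k`, where `J_k`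
and `K_k` are the moments `∫₀^π sin^k θ cos^j θ Q^(-k/2) dθ` for `j = 0, 1`. For `0 < r < 1`,
integration by parts together with `sin² = 1 - cos²` and `Q^(x+1) = (1 + r²) Q^x - 2 r cos θ Q^x`
links the moments for `k` and `k + 2`, so induction from the elementary cases `k = 1, 2` gives
`J_k = W_k` and `K_k = k/(k+2) W_k r` with `W_k = ∫₀^π sin^k`. As `Q(r, θ) = r² Q(1/r, θ)`,
the case `r > 1` follows by inversion, and `r = 1` is the substitution `θ = π - 2u`. Hence
`φ(r)/r` is a positive multiple of `g(min 1 r⁻¹)` with `g(a) = a^k - k/(k+2) a^(k+2)`, which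
increases on `[0, 1]`.
-/

namespace ShellField

variable {r : ℝ}

lemma sq_rpow_div_two {y : ℝ} (hy : 0 ≤ y) (n : ℕ) : (y ^ 2) ^ ((n : ℝ) / 2) = y ^ n := by
  rw [← rpow_natCast y 2, ← rpow_mul hy, ← rpow_natCast]
  congr 1
  push_cast
  ring

lemma sq_rpow_neg_div_two {y : ℝ} (hy : 0 ≤ y) (k : ℕ) : (y ^ 2) ^ (-(k : ℝ) / 2) = (y ^ k)⁻¹ := by
  rw [neg_div, rpow_neg (sq_nonneg y), sq_rpow_div_two hy]

lemma integral_sin_pow_add_two (k : ℕ) :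
    ∫ θ in 0..π, sin θ ^ (k + 2) = (k + 1) / (k + 2) * ∫ θ in 0..π, sin θ ^ k := by
  rw [integral_sin_pow]; simp

lemma integral_sin_pow_eq_two_mul (k : ℕ) :
    ∫ θ in 0..π, sin θ ^ k = 2 * ∫ θ in 0..π / 2, sin θ ^ k := by
  have hint : ∀ a b : ℝ, IntervalIntegrable (fun θ => sin θ ^ k) volume a b :=
    fun a b => (by fun_prop : Continuous fun θ => sin θ ^ k).intervalIntegrable a b
  have hsymm : ∫ θ in π / 2..π, sin θ ^ k = ∫ θ in 0..π / 2, sin θ ^ k := by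
    have h := intervalIntegral.integral_comp_sub_left (fun θ => sin θ ^ k) (a := π / 2) (b := π) π
    simp only [sin_pi_sub, sub_self] at h
    rw [h]; ring_nf
  rw [← intervalIntegral.integral_add_adjacent_intervals (hint 0 (π / 2)) (hint (π / 2) π), hsymm]
  ring

lemma integral_cos_sq_mul_sin_pow (k : ℕ) :
    ∫ u in 0..π / 2, 2 * cos u ^ 2 * sin u ^ k = 2 / (k + 2) * ∫ u in 0..π / 2, sin u ^ k := by
  have hsplit : ∫ u in 0..π / 2, 2 * cos u ^ 2 * sin u ^ k
      = 2 * ((∫ u in 0..π / 2, sin u ^ k) - ∫ u in 0..π / 2, sin u ^ (k + 2)) := by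
    rw [← intervalIntegral.integral_sub (by apply Continuous.intervalIntegrable; fun_prop)
      (by apply Continuous.intervalIntegrable; fun_prop), ← intervalIntegral.integral_const_mul]
    refine intervalIntegral.integral_congr fun u _ => ?_
    simp only [cos_sq', pow_add]
    ring
  rw [hsplit, integral_sin_pow]
  simp only [sin_zero, cos_pi_div_two, ne_eq, add_eq_zero, one_ne_zero, and_false,
    not_false_eq_true, zero_pow, zero_mul, mul_zero, sub_zero, zero_div, zero_add]
  field_simp
  ring

lemma sphereArea_pos {m : ℕ} (hm : 0 < m) : 0 < sphereArea m := by
  have h : (0 : ℝ) < m / 2 := by positivity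
  have := Gamma_pos_of_pos h
  unfold sphereArea
  positivity

lemma mul_cos_le_abs (r θ : ℝ) : r * cos θ ≤ |r| :=
  (le_abs_self _).trans <| by
    rw [abs_mul]; exact mul_le_of_le_one_right (abs_nonneg r) (abs_cos_le_one θ)

noncomputable def sqDist (r θ : ℝ) : ℝ := 1 + r ^ 2 - 2 * r * cos θ

lemma sqDist_eq (r θ : ℝ) : sqDist r θ = (r - cos θ) ^ 2 + sin θ ^ 2 := by
  rw [sqDist]; linear_combination -sin_sq_add_cos_sq θ

lemma sqDist_nonneg (r θ : ℝ) : 0 ≤ sqDist r θ := by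
  rw [sqDist_eq]; positivity

lemma sqDist_pos (hr : |r| ≠ 1) (θ : ℝ) : 0 < sqDist r θ := by
  have h1 : 0 < (1 - |r|) ^ 2 := by have : 1 - |r| ≠ 0 := sub_ne_zero.2 hr.symm; positivity
  rw [sqDist]; nlinarith [sq_abs r, mul_cos_le_abs r θ]

lemma sqDist_eq_sq_mul_sqDist_inv (hr : r ≠ 0) (θ : ℝ) : sqDist r θ = r ^ 2 * sqDist r⁻¹ θ := by
  simp only [sqDist]; field_simp; ring

lemma hasDerivAt_sqDist (r θ : ℝ) : HasDerivAt (sqDist r) (2 * r * sin θ) θ :=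
  (((hasDerivAt_cos θ).const_mul (2 * r)).const_sub (1 + r ^ 2)).congr_deriv (by ring)

lemma continuous_sqDist (r : ℝ) : Continuous (sqDist r) := by
  unfold sqDist; fun_prop

lemma continuous_sqDist_rpow (hr : |r| ≠ 1) (x : ℝ) : Continuous fun θ => sqDist r θ ^ x :=
  (continuous_sqDist r).rpow_const fun θ => Or.inl (sqDist_pos hr θ).ne'

noncomputable def kernelMoment (r : ℝ) (n j : ℕ) (x : ℝ) : ℝ :=
  ∫ θ in 0..π, sin θ ^ n * cos θ ^ j * sqDist r θ ^ x

lemma intervalIntegrable_kernelMoment (hr : |r| ≠ 1) (n j : ℕ) (x : ℝ) :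
    IntervalIntegrable (fun θ => sin θ ^ n * cos θ ^ j * sqDist r θ ^ x) volume 0 π :=
  ((by fun_prop : Continuous fun θ => sin θ ^ n * cos θ ^ j).mul
    (continuous_sqDist_rpow hr x)).intervalIntegrable _ _

lemma kernelMoment_add_one (hr : |r| ≠ 1) (n j : ℕ) (x : ℝ) :
    kernelMoment r n j (x + 1) =
      (1 + r ^ 2) * kernelMoment r n j x - 2 * r * kernelMoment r n (j + 1) x := by
  rw [kernelMoment, kernelMoment, kernelMoment, ← intervalIntegral.integral_const_mul,
    ← intervalIntegral.integral_const_mul,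
    ← intervalIntegral.integral_sub ((intervalIntegrable_kernelMoment hr n j x).const_mul _)
      ((intervalIntegrable_kernelMoment hr n (j + 1) x).const_mul _)]
  refine intervalIntegral.integral_congr fun θ _ => ?_
  rw [rpow_add_one (sqDist_pos hr θ).ne']
  simp only [sqDist]
  ring

lemma kernelMoment_sin_sq (hr : |r| ≠ 1) (n j : ℕ) (x : ℝ) :
    kernelMoment r (n + 2) j x = kernelMoment r n j x - kernelMoment r n (j + 2) x := by
  rw [kernelMoment, kernelMoment, kernelMoment,
    ← intervalIntegral.integral_sub (intervalIntegrable_kernelMoment hr n j x)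
      (intervalIntegrable_kernelMoment hr n (j + 2) x)]
  refine intervalIntegral.integral_congr fun θ _ => ?_
  rw [pow_add, sin_sq]
  ring

/-- Integration by parts against `d/dθ (sin θ ^ (n + 1) * cos θ ^ j * sqDist r θ ^ x)`, which
vanishes at both ends. For `j = 0` the middle term drops out despite the truncated `j - 1`. -/
lemma kernelMoment_by_parts (hr : |r| ≠ 1) (n j : ℕ) (x : ℝ) :
    (n + 1) * kernelMoment r n (j + 1) x - j * kernelMoment r (n + 2) (j - 1) x
      + 2 * x * r * kernelMoment r (n + 2) j (x - 1) = 0 := by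
  have hderiv : ∀ θ ∈ Set.uIcc 0 π, HasDerivAt
      (fun θ => sin θ ^ (n + 1) * cos θ ^ j * sqDist r θ ^ x)
      ((n + 1) * (sin θ ^ n * cos θ ^ (j + 1) * sqDist r θ ^ x)
        - j * (sin θ ^ (n + 2) * cos θ ^ (j - 1) * sqDist r θ ^ x)
        + 2 * x * r * (sin θ ^ (n + 2) * cos θ ^ j * sqDist r θ ^ (x - 1))) θ := by
    intro θ _
    have hs := (hasDerivAt_sin θ).pow (n + 1)
    have hc := (hasDerivAt_cos θ).pow j
    have hQ := (hasDerivAt_sqDist r θ).rpow_const (p := x) (Or.inl (sqDist_pos hr θ).ne')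
    refine ((hs.mul hc).mul hQ).congr_deriv ?_
    simp only [Pi.mul_apply, Pi.pow_apply, Nat.add_sub_cancel]
    push_cast
    ring
  have i1 := (intervalIntegrable_kernelMoment hr n (j + 1) x).const_mul ((n : ℝ) + 1)
  have i2 := (intervalIntegrable_kernelMoment hr (n + 2) (j - 1) x).const_mul (j : ℝ)
  have i3 := (intervalIntegrable_kernelMoment hr (n + 2) j (x - 1)).const_mul (2 * x * r)
  have h := intervalIntegral.integral_eq_sub_of_hasDerivAt hderiv ((i1.sub i2).add i3)
  rw [intervalIntegral.integral_add (i1.sub i2) i3, intervalIntegral.integral_sub i1 i2,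
    intervalIntegral.integral_const_mul, intervalIntegral.integral_const_mul,
    intervalIntegral.integral_const_mul] at h
  simpa [kernelMoment] using h

/-- Eliminating the moments of other orders `(n, j)` between the three relations above raises
`k` by two. -/
lemma kernelMoment_step (hr : |r| ≠ 1) (k : ℕ) :
    k * r * kernelMoment r (k + 2) 0 (-((k + 2 : ℕ) : ℝ) / 2) =
        (k + 1) * kernelMoment r k 1 (-k / 2) ∧
      k * (k + 4) * r ^ 2 * kernelMoment r (k + 2) 1 (-((k + 2 : ℕ) : ℝ) / 2) =
        (k + 1) * ((k + 2) * (1 + r ^ 2) * kernelMoment r k 1 (-k / 2)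
          - k * r * kernelMoment r k 0 (-k / 2)) := by
  have hx : -(k : ℝ) / 2 - 1 = -((k + 2 : ℕ) : ℝ) / 2 := by push_cast; ring
  have hx' : -((k + 2 : ℕ) : ℝ) / 2 + 1 = -(k : ℝ) / 2 := by push_cast; ring
  have eJ := kernelMoment_by_parts hr k 0 (-k / 2)
  have eK := kernelMoment_by_parts hr k 1 (-k / 2)
  rw [hx] at eJ eK
  simp only [Nat.cast_zero, Nat.cast_one, zero_mul, one_mul, sub_zero, Nat.zero_sub,
    Nat.sub_self] at eJ eK
  have e1 := kernelMoment_sin_sq hr k 0 (-k / 2)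
  have e2 := kernelMoment_sin_sq hr k 0 (-((k + 2 : ℕ) : ℝ) / 2)
  have e3 := kernelMoment_sin_sq hr k 1 (-((k + 2 : ℕ) : ℝ) / 2)
  have q0 := kernelMoment_add_one hr k 0 (-((k + 2 : ℕ) : ℝ) / 2)
  have q2 := kernelMoment_add_one hr k 2 (-((k + 2 : ℕ) : ℝ) / 2)
  rw [hx'] at q0 q2
  constructor
  · linear_combination -eJ
  · linear_combination (-((k : ℝ) + 4) * r) * eK + (-((k : ℝ) + 4) * r) * e1
      - ((k : ℝ) + 2) * ((1 + r ^ 2) * eJ + (-2 * r) * eK + (-2 * r) * e1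
        + ((1 + r ^ 2) * k * r) * e2 + (-2 * k * r ^ 2) * e3 + (-k * r) * q0 + (k * r) * q2)

lemma kernelMoment_eq_mul_kernelMoment_inv (hr : 0 < r) (n j : ℕ) (x : ℝ) :
    kernelMoment r n j x = (r ^ 2) ^ x * kernelMoment r⁻¹ n j x := by
  rw [kernelMoment, kernelMoment, ← intervalIntegral.integral_const_mul]
  refine intervalIntegral.integral_congr fun θ _ => ?_
  rw [sqDist_eq_sq_mul_sqDist_inv hr.ne', mul_rpow (sq_nonneg r) (sqDist_nonneg _ _)]
  ring

lemma kernelMoment_one_zero (hr : |r| ≠ 1) (hr0 : r ≠ 0) {y : ℝ} (hy : y ≠ 0) :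
    kernelMoment r 1 0 (y - 1) = (((1 + r) ^ 2) ^ y - ((1 - r) ^ 2) ^ y) / (2 * r * y) := by
  have hderiv : ∀ θ ∈ Set.uIcc 0 π,
      HasDerivAt (fun θ => sqDist r θ ^ y / (2 * r * y))
        (sin θ ^ 1 * cos θ ^ 0 * sqDist r θ ^ (y - 1)) θ := by
    intro θ _
    refine (((hasDerivAt_sqDist r θ).rpow_const (p := y)
      (Or.inl (sqDist_pos hr θ).ne')).div_const (2 * r * y)).congr_deriv ?_
    field_simp
  rw [kernelMoment, intervalIntegral.integral_eq_sub_of_hasDerivAt hderiv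
    (intervalIntegrable_kernelMoment hr 1 0 _)]
  simp only [sqDist, cos_pi, cos_zero]
  ring_nf

lemma kernelMoment_one_of_lt_one (hr0 : 0 < r) (hr1 : r < 1) :
    kernelMoment r 1 0 (-1 / 2) = 2 ∧ kernelMoment r 1 1 (-1 / 2) = 2 / 3 * r := by
  have hr : |r| ≠ 1 := by rw [abs_of_pos hr0]; exact hr1.ne
  have hJ : kernelMoment r 1 0 (-1 / 2) = 2 := by
    have h := kernelMoment_one_zero hr hr0.ne' (y := (1 : ℕ) / 2) (by norm_num)
    rw [sq_rpow_div_two (by linarith), sq_rpow_div_two (by linarith),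
      show ((1 : ℕ) : ℝ) / 2 - 1 = -1 / 2 by norm_num] at h
    rw [h]; field_simp; ring
  have hL : kernelMoment r 1 0 (-1 / 2 + 1) = 2 + 2 / 3 * r ^ 2 := by
    have h := kernelMoment_one_zero hr hr0.ne' (y := (3 : ℕ) / 2) (by norm_num)
    rw [sq_rpow_div_two (by linarith), sq_rpow_div_two (by linarith),
      show ((3 : ℕ) : ℝ) / 2 - 1 = -1 / 2 + 1 by norm_num] at h
    rw [h]; field_simp; ring
  have hQ := kernelMoment_add_one hr 1 0 (-1 / 2)
  rw [hL, hJ] at hQ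
  refine ⟨hJ, mul_left_cancel₀ (show 2 * r ≠ 0 by positivity) ?_⟩
  linear_combination hQ

lemma hasDerivAt_arctan_sin_div (hr : |r| < 1) (θ : ℝ) :
    HasDerivAt (fun θ => θ + 2 * arctan (r * sin θ / (1 - r * cos θ)))
      ((1 - r ^ 2) / sqDist r θ) θ := by
  have hden : 0 < 1 - r * cos θ := by linarith [mul_cos_le_abs r θ]
  have hQ := (sqDist_pos hr.ne θ).ne'
  have hq := ((hasDerivAt_sin θ).const_mul r).div
    (((hasDerivAt_cos θ).const_mul r).const_sub 1) hden.ne'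
  refine ((hasDerivAt_id θ).add (hq.arctan.const_mul 2)).congr_deriv ?_
  simp only [Pi.div_apply, sqDist] at hQ ⊢
  field_simp
  linear_combination (2 * r ^ 3 * cos θ - 2 * r ^ 2) * sin_sq_add_cos_sq θ

lemma integral_inv_sqDist (hr : |r| < 1) : ∫ θ in 0..π, (sqDist r θ)⁻¹ = π / (1 - r ^ 2) := by
  have h1 : 0 < 1 - r ^ 2 := by nlinarith [abs_lt.1 hr, sq_abs r, abs_nonneg r]
  have h := intervalIntegral.integral_eq_sub_of_hasDerivAt
    (fun θ _ => hasDerivAt_arctan_sin_div hr θ)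
    ((continuous_const.div (continuous_sqDist r)
      fun θ => (sqDist_pos hr.ne θ).ne').intervalIntegrable 0 π)
  simp only [div_eq_mul_inv, intervalIntegral.integral_const_mul, sin_pi, sin_zero, mul_zero,
    zero_mul, arctan_zero] at h
  rw [eq_div_iff h1.ne']
  linarith

lemma kernelMoment_two_of_lt_one (hr0 : 0 < r) (hr1 : r < 1) :
    kernelMoment r 2 0 (-1) = π / 2 ∧ kernelMoment r 2 1 (-1) = π / 4 * r := by
  have hr : |r| < 1 := by rwa [abs_of_pos hr0]
  have hP : (1 - r ^ 2) * kernelMoment r 0 0 (-1) = π := by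
    have h1 : 1 - r ^ 2 ≠ 0 := by nlinarith
    rw [kernelMoment]
    simp only [pow_zero, one_mul, rpow_neg_one, integral_inv_sqDist hr]
    field_simp
  have e1 := kernelMoment_add_one hr.ne 0 0 (-1)
  have e2 := kernelMoment_add_one hr.ne 0 1 (-1)
  have e3 := kernelMoment_sin_sq hr.ne 0 0 (-1)
  have e4 := kernelMoment_add_one hr.ne 2 0 (-1)
  have h00 : kernelMoment r 0 0 0 = π := by simp [kernelMoment]
  have h01 : kernelMoment r 0 1 0 = 0 := by simp [kernelMoment, integral_cos]
  have h20 : kernelMoment r 2 0 0 = π / 2 := by simp [kernelMoment]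
  rw [neg_add_cancel] at e1 e2 e4
  rw [h00] at e1
  rw [h01] at e2
  rw [h20] at e4
  have hJ : kernelMoment r 2 0 (-1) = π / 2 := by
    apply mul_left_cancel₀ (show 4 * r ^ 2 ≠ 0 by positivity)
    linear_combination 4 * r ^ 2 * e3 - 2 * r * e2 - (1 + r ^ 2) * e1 - (1 - r ^ 2) * hP
  refine ⟨hJ, mul_left_cancel₀ (show 2 * r ≠ 0 by positivity) ?_⟩
  linear_combination e4 + (1 + r ^ 2) * hJ

lemma kernelMoment_of_lt_one (hr0 : 0 < r) (hr1 : r < 1) {k : ℕ} (hk : 1 ≤ k) :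
    kernelMoment r k 0 (-k / 2) = ∫ θ in 0..π, sin θ ^ k ∧
      kernelMoment r k 1 (-k / 2) = k / (k + 2) * (∫ θ in 0..π, sin θ ^ k) * r := by
  have hr : |r| ≠ 1 := by rw [abs_of_pos hr0]; exact hr1.ne
  obtain ⟨k, rfl⟩ := Nat.exists_eq_add_of_le' hk
  induction k using Nat.twoStepInduction with
  | zero =>
    obtain ⟨hJ, hK⟩ := kernelMoment_one_of_lt_one hr0 hr1
    rw [zero_add, Nat.cast_one, hJ, hK]
    simp only [pow_one, integral_sin, cos_zero, cos_pi]
    constructor <;> ring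
  | one =>
    obtain ⟨hJ, hK⟩ := kernelMoment_two_of_lt_one hr0 hr1
    rw [show 1 + 1 = 2 from rfl, Nat.cast_ofNat, show -(2 : ℝ) / 2 = -1 by norm_num, hJ, hK,
      integral_sin_sq]
    simp only [sin_zero, sin_pi, zero_mul, sub_zero]
    constructor <;> ring
  | more m ih _ =>
    obtain ⟨hJ, hK⟩ := ih (by omega)
    obtain ⟨s1, s2⟩ := kernelMoment_step hr (m + 1)
    rw [show m + 2 + 1 = m + 1 + 2 from rfl, integral_sin_pow_add_two]
    set S := ∫ θ in 0..π, sin θ ^ (m + 1)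
    set κ : ℝ := ((m + 1 : ℕ) : ℝ) with hκ
    have hκ0 : 0 < κ := by positivity
    rw [hJ, hK] at s2
    rw [hK] at s1
    constructor
    · apply mul_left_cancel₀ (show κ * r ≠ 0 by positivity)
      rw [s1]
      field_simp
    · apply mul_left_cancel₀ (show κ * (κ + 4) * r ^ 2 ≠ 0 by positivity)
      rw [s2, show ((m + 1 + 2 : ℕ) : ℝ) = κ + 2 by rw [hκ]; push_cast; ring]
      field_simp
      ring

noncomputable def radialField (k : ℕ) (r : ℝ) : ℝ :=
  ∫ θ in 0..π, (r - cos θ) * sin θ ^ k * sqDist r θ ^ (-(k : ℝ) / 2)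

lemma radialField_eq_kernelMoment (hr : |r| ≠ 1) (k : ℕ) :
    radialField k r = r * kernelMoment r k 0 (-k / 2) - kernelMoment r k 1 (-k / 2) := by
  rw [radialField, kernelMoment, kernelMoment, ← intervalIntegral.integral_const_mul,
    ← intervalIntegral.integral_sub ((intervalIntegrable_kernelMoment hr k 0 _).const_mul r)
      (intervalIntegrable_kernelMoment hr k 1 _)]
  refine intervalIntegral.integral_congr fun θ _ => ?_
  simp only [pow_zero, pow_one]
  ring

lemma radialField_one_comp_pi_sub (k : ℕ) {u : ℝ} (hu : u ∈ Set.Icc 0 (π / 2)) :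
    (1 - cos (π - 2 * u)) * sin (π - 2 * u) ^ k * sqDist 1 (π - 2 * u) ^ (-(k : ℝ) / 2)
      = 2 * cos u ^ 2 * sin u ^ k := by
  have hcos : 0 ≤ cos u := cos_nonneg_of_mem_Icc ⟨by linarith [hu.1, pi_pos], hu.2⟩
  have hQ : sqDist 1 (π - 2 * u) = (2 * cos u) ^ 2 := by
    rw [sqDist, cos_pi_sub, cos_two_mul]; ring
  rw [hQ, sq_rpow_neg_div_two (by positivity), cos_pi_sub, cos_two_mul, sin_pi_sub, sin_two_mul]
  rcases hcos.eq_or_lt with h0 | hpos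
  · rw [← h0]; simp
  · field_simp
    ring

lemma radialField_one (k : ℕ) :
    radialField k 1 = 2 / (k + 2) * ∫ θ in 0..π, sin θ ^ k := by
  have h := intervalIntegral.integral_comp_sub_mul
    (fun θ => (1 - cos θ) * sin θ ^ k * sqDist 1 θ ^ (-(k : ℝ) / 2))
    (a := 0) (b := π / 2) two_ne_zero π
  rw [intervalIntegral.integral_congr fun u hu =>
    radialField_one_comp_pi_sub k (by rwa [Set.uIcc_of_le (by positivity)] at hu)] at h
  rw [integral_cos_sq_mul_sin_pow, mul_zero, sub_zero, show π - 2 * (π / 2) = 0 by ring,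
    smul_eq_mul] at h
  rw [integral_sin_pow_eq_two_mul, radialField]
  linear_combination -2 * h

noncomputable def shellProfile (k : ℕ) (a : ℝ) : ℝ := a ^ k - k / (k + 2) * a ^ (k + 2)

lemma radialField_div_self_of_le_one {k : ℕ} (hk : 1 ≤ k) (hr0 : 0 < r) (hr1 : r ≤ 1) :
    radialField k r / r = shellProfile k 1 * ∫ θ in 0..π, sin θ ^ k := by
  rcases hr1.lt_or_eq with hr1 | rfl
  · have hr : |r| ≠ 1 := by rw [abs_of_pos hr0]; exact hr1.ne
    obtain ⟨hJ, hK⟩ := kernelMoment_of_lt_one hr0 hr1 hk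
    rw [radialField_eq_kernelMoment hr, hJ, hK, shellProfile]
    field_simp
    ring
  · rw [radialField_one, shellProfile]
    field_simp
    ring

lemma radialField_div_self_of_one_le {k : ℕ} (hk : 1 ≤ k) (hr : 1 ≤ r) :
    radialField k r / r = shellProfile k r⁻¹ * ∫ θ in 0..π, sin θ ^ k := by
  rcases hr.lt_or_eq with hr1 | rfl
  · have hr0 : 0 < r := by linarith
    have hr' : |r| ≠ 1 := by rw [abs_of_pos hr0]; exact hr1.ne'
    obtain ⟨hJ, hK⟩ := kernelMoment_of_lt_one (inv_pos.2 hr0) (inv_lt_one_of_one_lt₀ hr1) hk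
    rw [radialField_eq_kernelMoment hr', kernelMoment_eq_mul_kernelMoment_inv hr0,
      kernelMoment_eq_mul_kernelMoment_inv hr0, hJ, hK,
      sq_rpow_neg_div_two hr0.le, shellProfile]
    simp only [inv_pow]
    field_simp
    ring
  · rw [inv_one]
    exact radialField_div_self_of_le_one hk one_pos le_rfl

lemma strictMonoOn_shellProfile {k : ℕ} (hk : 1 ≤ k) :
    StrictMonoOn (shellProfile k) (Set.Icc 0 1) := by
  obtain ⟨m, rfl⟩ := Nat.exists_eq_add_of_le' hk
  refine strictMonoOn_of_deriv_pos (convex_Icc 0 1) (by unfold shellProfile; fun_prop) ?_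
  intro a ha
  rw [interior_Icc] at ha
  have hd : HasDerivAt (shellProfile (m + 1)) ((m + 1) * a ^ m * (1 - a ^ 2)) a := by
    refine ((hasDerivAt_pow (m + 1) a).sub ((hasDerivAt_pow (m + 1 + 2) a).const_mul
      (((m + 1 : ℕ) : ℝ) / ((m + 1 : ℕ) + 2)))).congr_deriv ?_
    simp only [Nat.add_sub_cancel, show m + 1 + 2 - 1 = m + 2 from rfl]
    push_cast
    field_simp
    ring
  rw [hd.deriv]
  have : 0 < 1 - a ^ 2 := by nlinarith [ha.1, ha.2]
  have := ha.1
  positivity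

end ShellField

open ShellField

theorem stmt5 (d : ℕ) (hd : 3 ≤ d) (α : ℝ) (hα : α = 4 - (d : ℝ))
    (φ : ℝ → ℝ)
    (hφ : ∀ r : ℝ, φ r = sphereArea (d - 1) / sphereArea d *
      ∫ θ in (0:ℝ)..Real.pi,
        (r - Real.cos θ) * (Real.sin θ) ^ (d - 2) *
          (1 + r ^ 2 - 2 * r * Real.cos θ) ^ ((α - 2) / 2)) :
    (∃ C : ℝ, ∀ r ∈ Set.Ioc (0:ℝ) 1, φ r / r = C) ∧
      StrictAntiOn (fun r => φ r / r) (Set.Ici 1) := by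
  obtain ⟨k, rfl⟩ : ∃ k, d = k + 2 := ⟨d - 2, by omega⟩
  have hk : 1 ≤ k := by omega
  set c := sphereArea (k + 2 - 1) / sphereArea (k + 2)
  have hc : 0 < c := div_pos (sphereArea_pos (by omega)) (sphereArea_pos (by omega))
  have hφ' : ∀ r, φ r / r = c * (radialField k r / r) := by
    intro r
    rw [hφ, hα, mul_div_assoc, Nat.add_sub_cancel,
      show (4 - ((k + 2 : ℕ) : ℝ) - 2) / 2 = -(k : ℝ) / 2 by push_cast; ring]
    rfl
  refine ⟨⟨_, fun r hr => by rw [hφ', radialField_div_self_of_le_one hk hr.1 hr.2]⟩, ?_⟩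
  intro a ha b hb hab
  have ha0 : 0 < a := lt_of_lt_of_le one_pos ha
  have hb0 : 0 < b := ha0.trans hab
  simp only [hφ', radialField_div_self_of_one_le hk ha, radialField_div_self_of_one_le hk hb]
  refine mul_lt_mul_of_pos_left (mul_lt_mul_of_pos_right ?_ (integral_sin_pow_pos k)) hc
  exact strictMonoOn_shellProfile hk ⟨by positivity, inv_le_one_of_one_le₀ hb⟩
    ⟨by positivity, inv_le_one_of_one_le₀ ha⟩ (inv_strictAnti₀ ha0 hab)
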